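/- arXiv:math/0107014 — 8 statements merged into one kernel-verified Lean document; each statement's English description precedes it below -/
import Mathlib

section
/- Let U be an open subset of ℂ, λ ∈ U, J a finite index set, and {b_{n,j}}_{n≥0, j∈J} a family of meromorphic functions on U such that: (i) each b_{n,j} is holomorphic on U∖{λ}; (ii) b_n := Σ_{j∈J} b_{n,j} is holomorphic on U; (iii) for each j, the series Σ_{n≥0} b_{n,j} converges uniformly on every compact subset of U∖{λ}. Then Σ_{n≥0} b_n converges uniformly on every compact subset of U, and its sum gives a holomorphic extension to U of the function Σ_{j∈J} Σ_{n≥0} b_{n,j} defined on U∖{λ}. -/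
open Filter Metric Set Topology

lemma tuo_finset_sum {J : Type*} (s : Finset J) (F : J → ℕ → ℂ → ℂ) (L : J → ℂ → ℂ) (K : Set ℂ)
    (h : ∀ j ∈ s, TendstoUniformlyOn (F j) (L j) atTop K) :
    TendstoUniformlyOn (fun N z => ∑ j ∈ s, F j N z) (fun z => ∑ j ∈ s, L j z) atTop K := by
  classical
  induction s using Finset.induction with
  | empty =>
    simp only [Finset.sum_empty]
    exact fun u hu => Filter.Eventually.of_forall fun N x _ => refl_mem_uniformity hu
  | @insert a s hj ih =>
    simp only [Finset.sum_insert hj]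
    exact (h a (Finset.mem_insert_self a s)).add
      (ih fun j hjs => h j (Finset.mem_insert_of_mem hjs))

lemma ucs_union {F : ℕ → ℂ → ℂ} {K1 K2 : Set ℂ}
    (h1 : UniformCauchySeqOn F atTop K1) (h2 : UniformCauchySeqOn F atTop K2) :
    UniformCauchySeqOn F atTop (K1 ∪ K2) := by
  rw [Metric.uniformCauchySeqOn_iff] at *
  intro ε hε
  obtain ⟨N1, hN1⟩ := h1 ε hε
  obtain ⟨N2, hN2⟩ := h2 ε hε
  exact ⟨max N1 N2, fun m hm n hn x hx => hx.elim
    (hN1 m (le_trans (le_max_left _ _) hm) n (le_trans (le_max_left _ _) hn) x)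
    (hN2 m (le_trans (le_max_right _ _) hm) n (le_trans (le_max_right _ _) hn) x)⟩

/-- (Hirzebruch's lemma.) -/
theorem hirzebruch_holomorphic_extension {U : Set ℂ} (hU : IsOpen U) {lam : ℂ}
    (hlam : lam ∈ U) {J : Type*} [Fintype J] (b : ℕ → J → ℂ → ℂ) (B : ℕ → ℂ → ℂ)
    (h1 : ∀ n j, DifferentiableOn ℂ (b n j) (U \ {lam}))
    (h2 : ∀ n, DifferentiableOn ℂ (B n) U)
    (h2' : ∀ n, ∀ z ∈ U \ {lam}, B n z = ∑ j, b n j z)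
    (h3 : ∀ j, ∀ K ⊆ U \ {lam}, IsCompact K →
      TendstoUniformlyOn (fun N z => ∑ n ∈ Finset.range N, b n j z)
        (fun z => ∑' n, b n j z) Filter.atTop K) :
    ∃ g : ℂ → ℂ, DifferentiableOn ℂ g U ∧
      (∀ K ⊆ U, IsCompact K →
        TendstoUniformlyOn (fun N z => ∑ n ∈ Finset.range N, B n z) g Filter.atTop K) ∧
      ∀ z ∈ U \ {lam}, g z = ∑ j, ∑' n, b n j z := by
  classical
  set S : ℕ → ℂ → ℂ := fun N z => ∑ n ∈ Finset.range N, B n z with hS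
  -- partial sums agree with sum over j on U \ {lam}
  have hSsum : ∀ N, ∀ z ∈ U \ {lam},
      S N z = ∑ j, ∑ n ∈ Finset.range N, b n j z := by
    intro N z hz
    simp only [hS]
    rw [Finset.sum_comm]
    exact Finset.sum_congr rfl fun n _ => h2' n z hz
  -- uniform convergence (hence Cauchy) on compacts of U \ {lam}
  have hKout : ∀ K ⊆ U \ {lam}, IsCompact K →
      TendstoUniformlyOn S (fun z => ∑ j, ∑' n, b n j z) atTop K := by
    intro K hK hKc
    have := tuo_finset_sum (Finset.univ) (fun j N z => ∑ n ∈ Finset.range N, b n j z)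
      (fun j z => ∑' n, b n j z) K (fun j _ => h3 j K hK hKc)
    refine this.congr ?_
    filter_upwards with N z hz using (hSsum N z (hK hz)).symm
  -- S N is differentiable on U
  have hSdiff : ∀ N, DifferentiableOn ℂ (S N) U := by
    intro N
    simp only [hS]
    exact DifferentiableOn.fun_sum fun n _ => h2 n
  -- uniform Cauchy on all compacts of U
  have hCauchy : ∀ K ⊆ U, IsCompact K → UniformCauchySeqOn S atTop K := by
    intro K hKU hKc
    obtain ⟨r, hr, hball⟩ := Metric.isOpen_iff.mp hU lam hlam
    have hcball : closedBall lam (r / 2) ⊆ U :=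
      (closedBall_subset_ball (by linarith)).trans hball
    have hsphere : sphere lam (r / 2) ⊆ U \ {lam} := by
      intro z hz
      refine ⟨hcball (sphere_subset_closedBall hz), ?_⟩
      simp only [mem_singleton_iff]
      intro h
      rw [mem_sphere_iff_norm, h] at hz
      simp at hz
      linarith
    -- Cauchy on the sphere
    have hsC : UniformCauchySeqOn S atTop (sphere lam (r / 2)) :=
      (hKout _ hsphere (isCompact_sphere _ _)).uniformCauchySeqOn
    -- Cauchy on the closed ball via maximum principle
    have hbC : UniformCauchySeqOn S atTop (closedBall lam (r / 2)) := by
      rw [Metric.uniformCauchySeqOn_iff] at hsC ⊢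
      intro ε hε
      obtain ⟨N, hN⟩ := hsC (ε / 2) (by linarith)
      refine ⟨N, fun m hm n hn x hx => ?_⟩
      have hdiff : DiffContOnCl ℂ (fun z => S m z - S n z) (ball lam (r / 2)) := by
        have : DifferentiableOn ℂ (fun z => S m z - S n z) U :=
          (hSdiff m).sub (hSdiff n)
        exact DifferentiableOn.diffContOnCl
          (this.mono (by rw [closure_ball lam (by linarith : (r:ℝ)/2 ≠ 0)]; exact hcball))
      have hfr : ∀ z ∈ frontier (ball lam (r / 2)), ‖S m z - S n z‖ ≤ ε / 2 := by
        intro z hz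
        rw [frontier_ball lam (by linarith : (r:ℝ)/2 ≠ 0)] at hz
        have := hN m hm n hn z hz
        rw [dist_eq_norm] at this
        linarith
      have hx' : x ∈ closure (ball lam (r / 2)) := by
        rwa [closure_ball lam (by linarith : (r:ℝ)/2 ≠ 0)]
      have := Complex.norm_le_of_forall_mem_frontier_norm_le
        (isBounded_ball) hdiff hfr hx'
      rw [dist_eq_norm]
      linarith
    -- Cauchy on K \ ball: compact subset of U \ {lam}
    have hKoutC : UniformCauchySeqOn S atTop (K \ ball lam (r / 2)) := by
      refine (hKout _ ?_ (hKc.diff isOpen_ball)).uniformCauchySeqOn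
      intro z hz
      refine ⟨hKU hz.1, ?_⟩
      simp only [mem_singleton_iff]
      intro h
      exact hz.2 (by simp [h, hr])
    have : UniformCauchySeqOn S atTop ((K \ ball lam (r / 2)) ∪ closedBall lam (r / 2)) :=
      ucs_union hKoutC hbC
    refine this.mono ?_
    intro z hz
    by_cases h : z ∈ ball lam (r / 2)
    · exact Or.inr (ball_subset_closedBall h)
    · exact Or.inl ⟨hz, h⟩
  -- pointwise limit
  have hptwise : ∀ z ∈ U, ∃ c, Tendsto (fun N => S N z) atTop (𝓝 c) := by
    intro z hz
    have h1 : UniformCauchySeqOn S atTop {z} :=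
      hCauchy {z} (singleton_subset_iff.mpr hz) isCompact_singleton
    have : CauchySeq (fun N => S N z) := by
      rw [Metric.uniformCauchySeqOn_iff] at h1
      rw [Metric.cauchySeq_iff]
      intro ε hε
      obtain ⟨N, hN⟩ := h1 ε hε
      exact ⟨N, fun m hm n hn => hN m hm n hn z rfl⟩
    exact cauchySeq_tendsto_of_complete this
  set g : ℂ → ℂ := fun z => if hz : z ∈ U then (hptwise z hz).choose else 0 with hg
  have hgt : ∀ z ∈ U, Tendsto (fun N => S N z) atTop (𝓝 (g z)) := by
    intro z hz
    simp only [hg, dif_pos hz]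
    exact (hptwise z hz).choose_spec
  have hmain : ∀ K ⊆ U, IsCompact K → TendstoUniformlyOn S g atTop K := by
    intro K hKU hKc
    exact (hCauchy K hKU hKc).tendstoUniformlyOn_of_tendsto fun x hx => hgt x (hKU hx)
  refine ⟨g, ?_, hmain, ?_⟩
  · have : TendstoLocallyUniformlyOn S g atTop U :=
      (tendstoLocallyUniformlyOn_iff_forall_isCompact hU).mpr hmain
    exact this.differentiableOn (Filter.Eventually.of_forall hSdiff) hU
  · intro z hz
    have h1 : Tendsto (fun N => S N z) atTop (𝓝 (g z)) := hgt z hz.1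
    have h2 : Tendsto (fun N => S N z) atTop (𝓝 (∑ j, ∑' n, b n j z)) := by
      have := hKout {z} (singleton_subset_iff.mpr hz) isCompact_singleton
      have := this.tendsto_at (mem_singleton z)
      exact this
    exact tendsto_nhds_unique h1 h2
end

section
/- Let Δ be a complete simplicial multi-fan with edge vectors 𝒱 satisfying condition (P): L_{I,𝒱} = L_𝒱 for all I ∈ Σ^{(n)}. Fix a generic vector v ∈ L_𝒱 and an integer m ≥ 1. For I ∈ Σ^{(n)} write v = Σ_{i∈I} m_i v_i with m_i = ⟨u_i^I, v⟩ ∈ ℤ and define the mod m face I_{(m)} = {i ∈ I : m ∤ m_i}. If I' ∈ Σ^{(n)} contains K = I_{(m)}, then K = I'_{(m)}, and moreover ⟨u_i^{I'}, v⟩ ≡ ⟨u_i^I, v⟩ (mod m) for all i ∈ K. -/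
open scoped Classical

/-- Let `Δ` be a complete simplicial multi-fan with edge vectors `𝒱` satisfying
condition (P): `L_{I,𝒱} = L_𝒱` for all `I ∈ Σ^{(n)}`.  (We work inside the common
lattice `L = L_𝒱`, of which `{v i}_{i∈I}` is a basis for each top simplex `I`, with
dual basis `uI I i`; `hcomplete` encodes completeness.)  Fix a generic `vgen ∈ L_𝒱`
and `m ≥ 1`, and let `I_{(m)} = {i ∈ I : m ∤ ⟨u_i^I, vgen⟩}` be the mod `m` face.
If `I' ∈ Σ^{(n)}` contains `K = I_{(m)}`, then `K = I'_{(m)}` and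
`⟨u_i^{I'}, vgen⟩ ≡ ⟨u_i^I, vgen⟩ (mod m)` for all `i ∈ K`. -/
theorem modm_face_stable
    {L : Type*} [AddCommGroup L]
    {ι : Type*} [Fintype ι]
    (n : ℕ) (v : ι → L) (Sn : Finset (Finset ι)) (hSn : Sn.Nonempty)
    (hcard : ∀ I ∈ Sn, I.card = n)
    (wt : Finset ι → ℤ)
    (uI : Finset ι → ι → (L →ₗ[ℤ] ℤ))
    (hdual : ∀ I ∈ Sn, ∀ i ∈ I, ∀ j ∈ I, uI I i (v j) = if i = j then 1 else 0)
    (hbasis : ∀ I ∈ Sn, ∀ x : L, x = ∑ i ∈ I, uI I i x • v i)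
    (hcomplete : ∀ K : Finset ι, (∃ I ∈ Sn, K ⊆ I) →
      ∃ d : ℤ, ∀ vg : L,
        (∀ I ∈ Sn, K ⊆ I → ∀ i ∈ I \ K, uI I i vg ≠ 0) →
        ∑ I ∈ Sn.filter (fun I => K ⊆ I ∧ ∀ i ∈ I \ K, 0 < uI I i vg), wt I = d)
    (m : ℤ) (hm : 1 ≤ m)
    (vgen : L) (hgen : ∀ I ∈ Sn, ∀ i ∈ I, uI I i vgen ≠ 0)
    (I I' : Finset ι) (hI : I ∈ Sn) (hI' : I' ∈ Sn)
    (hKI' : I.filter (fun i => ¬ m ∣ uI I i vgen) ⊆ I') :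
    I.filter (fun i => ¬ m ∣ uI I i vgen) = I'.filter (fun i => ¬ m ∣ uI I' i vgen) ∧
      ∀ i ∈ I.filter (fun i => ¬ m ∣ uI I i vgen),
        Int.ModEq m (uI I' i vgen) (uI I i vgen) := by
  set K := I.filter (fun i => ¬ m ∣ uI I i vgen) with hKdef
  have hKI : K ⊆ I := Finset.filter_subset _ _
  -- Key congruence: for j ∈ I', uI I' j vgen ≡ (if j ∈ K then uI I j vgen else 0) mod m
  have key : ∀ j ∈ I', Int.ModEq m (uI I' j vgen)
      (if j ∈ K then uI I j vgen else 0) := by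
    intro j hj
    have hexp : uI I' j vgen = ∑ i ∈ I, (uI I i vgen) * (uI I' j (v i)) := by
      conv_lhs => rw [hbasis I hI vgen]
      rw [map_sum]
      exact Finset.sum_congr rfl fun i _ => by rw [map_zsmul, smul_eq_mul]
    have hsplit : ∑ i ∈ K, (uI I i vgen) * (uI I' j (v i))
        + ∑ i ∈ I.filter (fun i => ¬ ¬ m ∣ uI I i vgen),
            (uI I i vgen) * (uI I' j (v i))
        = ∑ i ∈ I, (uI I i vgen) * (uI I' j (v i)) :=
      Finset.sum_filter_add_sum_filter_not I _ _
    have hdvd : m ∣ ∑ i ∈ I.filter (fun i => ¬ ¬ m ∣ uI I i vgen),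
        (uI I i vgen) * (uI I' j (v i)) := by
      refine Finset.dvd_sum fun i hi => Dvd.dvd.mul_right ?_ _
      exact not_not.mp (Finset.mem_filter.mp hi).2
    have hKsum : ∑ i ∈ K, (uI I i vgen) * (uI I' j (v i))
        = if j ∈ K then uI I j vgen else 0 := by
      have : ∀ i ∈ K, (uI I i vgen) * (uI I' j (v i))
          = if j = i then uI I i vgen else 0 := by
        intro i hi
        rw [hdual I' hI' j hj i (hKI' hi)]
        simp [eq_comm]
      rw [Finset.sum_congr rfl this, Finset.sum_ite_eq]
    have : uI I' j vgen - (if j ∈ K then uI I j vgen else 0)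
        = ∑ i ∈ I.filter (fun i => ¬ ¬ m ∣ uI I i vgen),
            (uI I i vgen) * (uI I' j (v i)) := by
      rw [hexp, ← hsplit, hKsum]; ring
    have hdvd' : m ∣ uI I' j vgen - (if j ∈ K then uI I j vgen else 0) := this ▸ hdvd
    exact (Int.modEq_iff_dvd.mpr (by simpa using (dvd_neg.mpr hdvd')))
  constructor
  · apply Finset.ext
    intro j
    constructor
    · intro hj
      have hj' : j ∈ I' := hKI' hj
      have hmod := key j hj'
      rw [if_pos hj] at hmod
      refine Finset.mem_filter.mpr ⟨hj', fun hdvd => ?_⟩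
      have : m ∣ uI I j vgen := (Int.modEq_zero_iff_dvd.mp
        (hmod.symm.trans (Int.modEq_zero_iff_dvd.mpr hdvd)))
      exact (Finset.mem_filter.mp hj).2 this
    · intro hj
      obtain ⟨hjI', hjnd⟩ := Finset.mem_filter.mp hj
      by_contra hjK
      have hmod := key j hjI'
      rw [if_neg hjK] at hmod
      exact hjnd (Int.modEq_zero_iff_dvd.mp hmod)
  · intro i hi
    have := key i (hKI' hi)
    rwa [if_pos hi] at this
end

section
/- Under condition (P) (L_{I,𝒱} = L_𝒱 for all I ∈ Σ^{(n)}), let X be an equivalence class of the (v,m)-equivalence relation on Σ^{(n)} (where I ∼ I' iff I_{(m)} = I'_{(m)}). For any x = Σ_i a_i x_i ∈ H_T²(Δ) (a_i ∈ ℤ), the value ⟨ι_I*(x), v⟩ mod m is independent of the choice of I ∈ X, where ι_I*(x) = Σ_{i∈I} a_i u_i^I. -/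
/-!
Write `K = I_{(m)} = I'_{(m)}`. Expanding `vgen` in the basis indexed by `I'` and pairing with
`u_i^I` gives `⟨u_i^I, vgen⟩ = Σ_{j ∈ I'} ⟨u_j^{I'}, vgen⟩ ⟨u_i^I, v_j⟩`; modulo `m` only the
`j ∈ K ⊆ I` survive, where `⟨u_i^I, v_j⟩ = δ_{ij}`. Hence `⟨u_i^I, vgen⟩ ≡ ⟨u_i^{I'}, vgen⟩` for
`i ∈ K`, while the terms with `i ∉ K` vanish modulo `m` in both restrictions.
-/

open scoped Classical

open Finset

theorem Int.sum_mul_modEq_sum_filter_not_dvd {ι : Type*} (s : Finset ι) (a c : ι → ℤ)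
    (m : ℤ) :
    ∑ i ∈ s, a i * c i ≡ ∑ i ∈ s.filter (fun i => ¬ m ∣ c i), a i * c i [ZMOD m] := by
  rw [← sum_filter_add_sum_filter_not s (fun i => ¬ m ∣ c i)]
  have hrest : ∑ i ∈ s.filter (fun i => ¬¬ m ∣ c i), a i * c i ≡ 0 [ZMOD m] :=
    Int.ModEq.sum_zero fun i hi => Int.modEq_zero_iff_dvd.mpr
      ((not_not.mp (mem_filter.mp hi).2).mul_left (a i))
  simpa only [add_zero] using hrest.add_left (∑ i ∈ s.filter (fun i => ¬ m ∣ c i), a i * c i)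

theorem coord_modEq_coord_of_not_dvd_imp_mem {L ι : Type*} [AddCommGroup L] (v : ι → L)
    {I I' : Finset ι} {u u' : ι → L →ₗ[ℤ] ℤ} {x : L} {m : ℤ}
    (hdual : ∀ i ∈ I, ∀ j ∈ I, u i (v j) = if i = j then 1 else 0)
    (hx : x = ∑ j ∈ I', u' j x • v j)
    (hsub : ∀ j ∈ I', ¬ m ∣ u' j x → j ∈ I) {i : ι} (hi : i ∈ I) (hi' : i ∈ I') :
    u i x ≡ u' i x [ZMOD m] := by
  have hexpand : u i x = ∑ j ∈ I', u' j x * u i (v j) := by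
    conv_lhs => rw [hx]
    simp only [map_sum, map_zsmul, smul_eq_mul]
  rw [hexpand]
  convert Int.sum_modEq_single (fun h => absurd hi' h) fun j hj hji => ?_ using 1
  · rw [hdual i hi i hi, if_pos rfl, mul_one]
  · by_cases hmj : m ∣ u' j x
    · exact Int.modEq_zero_iff_dvd.mpr (dvd_mul_of_dvd_left hmj _)
    · rw [hdual i hi j (hsub j hj hmj), if_neg (Ne.symm hji), mul_zero]

/-- Condition (P) is encoded by working in the common lattice `L = L_𝒱`, in which
`{v i}_{i ∈ I}` is a basis with dual basis `uI I` for every `I ∈ Sn`. -/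
theorem restriction_modm_constant_on_class_general
    {L : Type*} [AddCommGroup L]
    {ι : Type*}
    (v : ι → L) (Sn : Finset (Finset ι))
    (uI : Finset ι → ι → (L →ₗ[ℤ] ℤ))
    (hdual : ∀ I ∈ Sn, ∀ i ∈ I, ∀ j ∈ I, uI I i (v j) = if i = j then 1 else 0)
    (hbasis : ∀ I ∈ Sn, ∀ x : L, x = ∑ i ∈ I, uI I i x • v i)
    (m : ℤ)
    (vgen : L)
    (I I' : Finset ι) (hI : I ∈ Sn) (hI' : I' ∈ Sn)
    (hface : I.filter (fun i => ¬ m ∣ uI I i vgen) =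
      I'.filter (fun i => ¬ m ∣ uI I' i vgen))
    (a : ι → ℤ) :
    Int.ModEq m (∑ i ∈ I, a i * uI I i vgen) (∑ i ∈ I', a i * uI I' i vgen) := by
  have hsub : ∀ j ∈ I', ¬ m ∣ uI I' j vgen → j ∈ I := fun j hj hmj =>
    (mem_filter.mp (hface ▸ mem_filter.mpr ⟨hj, hmj⟩)).1
  calc ∑ i ∈ I, a i * uI I i vgen
      ≡ ∑ i ∈ I.filter (fun i => ¬ m ∣ uI I i vgen), a i * uI I i vgen [ZMOD m] :=
        Int.sum_mul_modEq_sum_filter_not_dvd _ _ _ _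
    _ ≡ ∑ i ∈ I.filter (fun i => ¬ m ∣ uI I i vgen), a i * uI I' i vgen [ZMOD m] :=
        Int.ModEq.sum fun i hi => Int.ModEq.mul_left _ <|
          coord_modEq_coord_of_not_dvd_imp_mem v (hdual I hI) (hbasis I' hI' vgen) hsub
            (mem_filter.mp hi).1 (mem_filter.mp (hface ▸ hi)).1
    _ = ∑ i ∈ I'.filter (fun i => ¬ m ∣ uI I' i vgen), a i * uI I' i vgen := by rw [hface]
    _ ≡ ∑ i ∈ I', a i * uI I' i vgen [ZMOD m] :=
        (Int.sum_mul_modEq_sum_filter_not_dvd _ _ _ _).symm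

/-- Under condition (P) (encoded by working inside the common lattice `L = L_𝒱`, of
which `{v i}_{i∈I}` is a basis for each `I ∈ Σ^{(n)}`, with dual basis `uI I i`;
`hcomplete` encodes completeness of the multi-fan), if `I` and `I'` are
`(vgen,m)`-equivalent, i.e. have the same mod `m` face
`I_{(m)} = {i ∈ I : m ∤ ⟨u_i^I, vgen⟩}`, then for any
`x = Σ_i a_i x_i ∈ H_T²(Δ)` the value `⟨ι_I^*(x), vgen⟩ = Σ_{i∈I} a_i ⟨u_i^I, vgen⟩`
mod `m` is the same for `I` and `I'`. -/
theorem restriction_modm_constant_on_class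
    {L : Type*} [AddCommGroup L]
    {ι : Type*} [Fintype ι]
    (n : ℕ) (v : ι → L) (Sn : Finset (Finset ι)) (hSn : Sn.Nonempty)
    (hcard : ∀ I ∈ Sn, I.card = n)
    (wt : Finset ι → ℤ)
    (uI : Finset ι → ι → (L →ₗ[ℤ] ℤ))
    (hdual : ∀ I ∈ Sn, ∀ i ∈ I, ∀ j ∈ I, uI I i (v j) = if i = j then 1 else 0)
    (hbasis : ∀ I ∈ Sn, ∀ x : L, x = ∑ i ∈ I, uI I i x • v i)
    (hcomplete : ∀ K : Finset ι, (∃ I ∈ Sn, K ⊆ I) →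
      ∃ d : ℤ, ∀ vg : L,
        (∀ I ∈ Sn, K ⊆ I → ∀ i ∈ I \ K, uI I i vg ≠ 0) →
        ∑ I ∈ Sn.filter (fun I => K ⊆ I ∧ ∀ i ∈ I \ K, 0 < uI I i vg), wt I = d)
    (m : ℤ) (hm : 1 ≤ m)
    (vgen : L) (hgen : ∀ I ∈ Sn, ∀ i ∈ I, uI I i vgen ≠ 0)
    (I I' : Finset ι) (hI : I ∈ Sn) (hI' : I' ∈ Sn)
    (hface : I.filter (fun i => ¬ m ∣ uI I i vgen) =
      I'.filter (fun i => ¬ m ∣ uI I' i vgen))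
    (a : ι → ℤ) :
    Int.ModEq m (∑ i ∈ I, a i * uI I i vgen) (∑ i ∈ I', a i * uI I' i vgen) :=
  restriction_modm_constant_on_class_general v Sn uI hdual hbasis m vgen I I' hI hI' hface a
end

section
/- Suppose condition (P) holds, c₁(Δ,𝒱) is divisible by N (so c₁^T(Δ,𝒱) = Nx + u with u ∈ L*), v ∈ L_𝒱 generic, m ≥ 1. For I ∈ Σ^{(n)} write ⟨u_i^I, v⟩ = m h_i + r_i with 0 ≤ r_i < m. Then Σ_{i∈I} h_i mod N depends only on the (v,m)-equivalence class of I. -/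
open scoped Classical

private lemma aux_rem_zero (m a b : ℤ) (hm : 1 ≤ m) (hd : m ∣ (m * a + b))
    (h0 : 0 ≤ b) (h1 : b < m) : b = 0 := by
  have hb : m ∣ b := (dvd_add_right (Dvd.intro a rfl)).mp hd
  obtain ⟨d, hdd⟩ := hb
  subst hdd
  rcases lt_trichotomy d 0 with hc | hc | hc
  · nlinarith
  · simp [hc]
  · nlinarith

private lemma aux_rem_eq (m a b : ℤ) (hm : 1 ≤ m) (hd : m ∣ (a - b))
    (ha0 : 0 ≤ a) (ha1 : a < m) (hb0 : 0 ≤ b) (hb1 : b < m) : a = b := by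
  obtain ⟨d, hdd⟩ := hd
  rcases lt_trichotomy d 0 with hc | hc | hc
  · nlinarith
  · rw [hc, mul_zero] at hdd; linarith
  · nlinarith

/-- Suppose condition (P) holds (encoded by working inside the common lattice
`L = L_𝒱`, of which `{v i}_{i∈I}` is a basis for each `I ∈ Σ^{(n)}`, with dual basis
`uI I i`; `hcomplete` encodes completeness), and `c₁(Δ,𝒱)` is divisible by `N`, i.e.
`c₁^T(Δ,𝒱) = N·x + u` with `u ∈ L*` (`hdiv`).  Fix a generic `vgen` and `m ≥ 1`, and
for `I ∈ Σ^{(n)}` write `⟨u_i^I, vgen⟩ = m·h_i + r_i` with `0 ≤ r_i < m`.  Then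
`Σ_{i∈I} h_i mod N` depends only on the `(vgen,m)`-equivalence class of `I`
(i.e. agrees for `I, I'` with the same mod `m` face). -/
theorem type_well_defined
    {L : Type*} [AddCommGroup L]
    {ι : Type*} [Fintype ι]
    (n : ℕ) (v : ι → L) (Sn : Finset (Finset ι)) (hSn : Sn.Nonempty)
    (hcard : ∀ I ∈ Sn, I.card = n)
    (wt : Finset ι → ℤ)
    (uI : Finset ι → ι → (L →ₗ[ℤ] ℤ))
    (hdual : ∀ I ∈ Sn, ∀ i ∈ I, ∀ j ∈ I, uI I i (v j) = if i = j then 1 else 0)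
    (hbasis : ∀ I ∈ Sn, ∀ x : L, x = ∑ i ∈ I, uI I i x • v i)
    (hcomplete : ∀ K : Finset ι, (∃ I ∈ Sn, K ⊆ I) →
      ∃ d : ℤ, ∀ vg : L,
        (∀ I ∈ Sn, K ⊆ I → ∀ i ∈ I \ K, uI I i vg ≠ 0) →
        ∑ I ∈ Sn.filter (fun I => K ⊆ I ∧ ∀ i ∈ I \ K, 0 < uI I i vg), wt I = d)
    (N : ℤ) (hN : 1 < N)
    (hdiv : ∃ x : ι → ℤ, ∃ u : L →ₗ[ℤ] ℤ, ∀ i : ι, (1 : ℤ) = N * x i + u (v i))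
    (m : ℤ) (hm : 1 ≤ m)
    (vgen : L) (hgen : ∀ I ∈ Sn, ∀ i ∈ I, uI I i vgen ≠ 0)
    (h r : Finset ι → ι → ℤ)
    (hhr : ∀ I ∈ Sn, ∀ i ∈ I,
      uI I i vgen = m * h I i + r I i ∧ 0 ≤ r I i ∧ r I i < m)
    (I I' : Finset ι) (hI : I ∈ Sn) (hI' : I' ∈ Sn)
    (hface : I.filter (fun i => ¬ m ∣ uI I i vgen) =
      I'.filter (fun i => ¬ m ∣ uI I' i vgen)) :
    Int.ModEq N (∑ i ∈ I, h I i) (∑ i ∈ I', h I' i) := by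
  obtain ⟨x, u, hu⟩ := hdiv
  set K := I.filter (fun i => ¬ m ∣ uI I i vgen) with hKdef
  have hKI : K ⊆ I := Finset.filter_subset _ _
  have hKI' : K ⊆ I' := by rw [hface]; exact Finset.filter_subset _ _
  -- remainders vanish off the face
  have hr0 : ∀ J, J ∈ Sn → (K = J.filter (fun i => ¬ m ∣ uI J i vgen)) →
      ∀ i ∈ J, i ∉ K → r J i = 0 := by
    intro J hJ hKJ i hi hik
    have hdvd : m ∣ uI J i vgen := by
      by_contra hc
      exact hik (hKJ ▸ Finset.mem_filter.mpr ⟨hi, hc⟩)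
    obtain ⟨heq, h0, h1⟩ := hhr J hJ i hi
    exact aux_rem_zero m (h J i) (r J i) hm (heq ▸ hdvd) h0 h1
  -- key expansion of f vgen for any functional f and any maximal cone J
  have key : ∀ (f : L →ₗ[ℤ] ℤ) (J : Finset ι), J ∈ Sn →
      (K = J.filter (fun i => ¬ m ∣ uI J i vgen)) →
      f vgen = m * (∑ i ∈ J, h J i * f (v i)) + ∑ i ∈ K, r J i * f (v i) := by
    intro f J hJ hKJ
    have hKJ' : K ⊆ J := hKJ ▸ Finset.filter_subset _ _
    have hrK : ∑ i ∈ K, r J i * f (v i) = ∑ i ∈ J, r J i * f (v i) :=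
      Finset.sum_subset hKJ' (fun i hi hik => by rw [hr0 J hJ hKJ i hi hik, zero_mul])
    calc f vgen = f (∑ i ∈ J, uI J i vgen • v i) := by rw [← hbasis J hJ vgen]
      _ = ∑ i ∈ J, uI J i vgen * f (v i) := by
          rw [map_sum]; exact Finset.sum_congr rfl fun i _ => by
            rw [map_zsmul, smul_eq_mul]
      _ = ∑ i ∈ J, ((m * h J i + r J i) * f (v i)) := by
          refine Finset.sum_congr rfl fun i hi => ?_
          rw [(hhr J hJ i hi).1]
      _ = m * (∑ i ∈ J, h J i * f (v i)) + ∑ i ∈ J, r J i * f (v i) := by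
          rw [Finset.mul_sum, ← Finset.sum_add_distrib]
          exact Finset.sum_congr rfl fun i _ => by ring
      _ = m * (∑ i ∈ J, h J i * f (v i)) + ∑ i ∈ K, r J i * f (v i) := by rw [hrK]
  -- remainders agree on K
  have hreq : ∀ j ∈ K, r I j = r I' j := by
    intro j hj
    have e1 := key (uI I j) I hI rfl
    have e2 := key (uI I j) I' hI' hface
    have hjI : j ∈ I := hKI hj
    have hs : ∀ J₀ : Finset ι, ∑ i ∈ K, r J₀ i * uI I j (v i) = r J₀ j := by
      intro J₀
      rw [Finset.sum_eq_single j]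
      · rw [hdual I hI j hjI j hjI, if_pos rfl, mul_one]
      · intro i hi hij
        rw [hdual I hI j hjI i (hKI hi), if_neg (fun hh => hij hh.symm), mul_zero]
      · intro hh; exact absurd hj hh
    rw [hs I] at e1
    rw [hs I'] at e2
    refine aux_rem_eq m (r I j) (r I' j) hm ⟨(∑ i ∈ I', h I' i * uI I j (v i)) -
      (∑ i ∈ I, h I i * uI I j (v i)), by linarith⟩ ?_ ?_ ?_ ?_
    · exact (hhr I hI j hjI).2.1
    · exact (hhr I hI j hjI).2.2
    · exact (hhr I' hI' j (hKI' hj)).2.1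
    · exact (hhr I' hI' j (hKI' hj)).2.2
  -- apply u : the "heights" pair equally against u
  have e1 := key u I hI rfl
  have e2 := key u I' hI' hface
  have hC : ∑ i ∈ K, r I i * u (v i) = ∑ i ∈ K, r I' i * u (v i) :=
    Finset.sum_congr rfl fun i hi => by rw [hreq i hi]
  have hmain : (∑ i ∈ I, h I i * u (v i)) = ∑ i ∈ I', h I' i * u (v i) := by
    have : m * (∑ i ∈ I, h I i * u (v i)) = m * (∑ i ∈ I', h I' i * u (v i)) := by
      linarith [hC, e1, e2]
    exact mul_left_cancel₀ (by linarith : m ≠ 0) this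
  -- conclude mod N
  have step : ∀ J : Finset ι, J ∈ Sn →
      Int.ModEq N (∑ i ∈ J, h J i) (∑ i ∈ J, h J i * u (v i)) := by
    intro J hJ
    have : (∑ i ∈ J, h J i) - (∑ i ∈ J, h J i * u (v i)) = N * ∑ i ∈ J, h J i * x i := by
      rw [Finset.mul_sum, ← Finset.sum_sub_distrib]
      refine Finset.sum_congr rfl fun i _ => ?_
      linear_combination (h J i) * (hu i)
    exact (Int.modEq_iff_dvd.mpr ⟨∑ i ∈ J, h J i * x i, by linarith⟩).symm
  calc (∑ i ∈ I, h I i) ≡ ∑ i ∈ I, h I i * u (v i) [ZMOD N] := step I hI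
    _ = ∑ i ∈ I', h I' i * u (v i) := hmain
    _ ≡ ∑ i ∈ I', h I' i [ZMOD N] := (step I' hI').symm
end

section
/- Let Δ be a complete simplicial multi-fan of dimension n. Then T_y[Δ] = Σ_{k=0}^n e_k(Δ)(-1-y)^{n-k}, where e_k(Δ) = Σ_{J∈Σ^{(k)}} deg(Δ_J) is the sum of degrees of the projected multi-fans over all (k-1)-dimensional simplices J. -/
open scoped Classical

/-- For a complete simplicial multi-fan `Δ` of dimension `n` (data: top simplices
`Sn`, weights `wt`, dual bases `uI I i`, and degree function `d` of the projected
multi-fans `Δ_J`, characterized by `hd`, which encodes completeness):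
`T_y[Δ] = Σ_{k=0}^n h_k(Δ)(-y)^k = Σ_{k=0}^n e_k(Δ)(-1-y)^{n-k}`, where
`h_k(Δ) = Σ_{μ(I)=k} w(I)` (with `μ(I) = #{i ∈ I : ⟨u_i^I, vgen⟩ > 0}` for a generic
`vgen`) and `e_k(Δ) = Σ_{J ∈ Σ^{(k)}} deg(Δ_J)`. -/
theorem Ty_genus_e_formula
    {L : Type*} [AddCommGroup L] [Module.Free ℤ L] [Module.Finite ℤ L]
    {ι : Type*} [Fintype ι]
    (n : ℕ) (v : ι → L) (Sn : Finset (Finset ι)) (hSn : Sn.Nonempty)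
    (hcard : ∀ I ∈ Sn, I.card = n)
    (wt : Finset ι → ℤ)
    (uI : Finset ι → ι → (L →ₗ[ℤ] ℚ))
    (hdual : ∀ I ∈ Sn, ∀ i ∈ I, ∀ j ∈ I, uI I i (v j) = if i = j then 1 else 0)
    (d : Finset ι → ℤ)
    (hd : ∀ K : Finset ι, (∃ I ∈ Sn, K ⊆ I) → ∀ vg : L,
      (∀ I ∈ Sn, K ⊆ I → ∀ i ∈ I \ K, uI I i vg ≠ 0) →
      ∑ I ∈ Sn.filter (fun I => K ⊆ I ∧ ∀ i ∈ I \ K, 0 < uI I i vg), wt I = d K)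
    (vgen : L) (hgen : ∀ I ∈ Sn, ∀ i ∈ I, uI I i vgen ≠ 0) :
    ∀ y : ℤ,
      (∑ k ∈ Finset.range (n + 1),
        (∑ I ∈ Sn.filter (fun I => (I.filter fun i => 0 < uI I i vgen).card = k), wt I) *
          (-y) ^ k) =
      ∑ k ∈ Finset.range (n + 1),
        (∑ J ∈ (Finset.univ : Finset (Finset ι)).filter
            (fun J => J.card = k ∧ ∃ I ∈ Sn, J ⊆ I), d J) *
          (-1 - y) ^ (n - k) := by
  intro y
  classical
  set μ : Finset ι → ℕ := fun I => (I.filter fun i => 0 < uI I i vgen).card with hμ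
  -- the left-hand side collected over I
  have hL : (∑ k ∈ Finset.range (n + 1),
      (∑ I ∈ Sn.filter (fun I => (I.filter fun i => 0 < uI I i vgen).card = k), wt I) *
        (-y) ^ k) = ∑ I ∈ Sn, wt I * (-y) ^ μ I := by
    rw [← Finset.sum_fiberwise_of_maps_to (g := μ) (t := Finset.range (n + 1))
      (fun I hI => by
        simp only [Finset.mem_range, Nat.lt_succ_iff, hμ]
        calc (I.filter fun i => 0 < uI I i vgen).card ≤ I.card := Finset.card_filter_le _ _
          _ = n := hcard I hI)
      (fun I => wt I * (-y) ^ μ I)]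
    refine Finset.sum_congr rfl fun k _ => ?_
    rw [Finset.sum_mul]
    refine Finset.sum_congr rfl fun I hI => ?_
    rw [(Finset.mem_filter.mp hI).2]
  rw [hL]
  -- the right-hand side collected over J
  have hR : (∑ k ∈ Finset.range (n + 1),
      (∑ J ∈ (Finset.univ : Finset (Finset ι)).filter
          (fun J => J.card = k ∧ ∃ I ∈ Sn, J ⊆ I), d J) * (-1 - y) ^ (n - k)) =
      ∑ J ∈ (Finset.univ : Finset (Finset ι)).filter (fun J => ∃ I ∈ Sn, J ⊆ I),
        d J * (-1 - y) ^ (n - J.card) := by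
    rw [← Finset.sum_fiberwise_of_maps_to (g := Finset.card) (t := Finset.range (n + 1))
      (s := (Finset.univ : Finset (Finset ι)).filter (fun J => ∃ I ∈ Sn, J ⊆ I))
      (fun J hJ => by
        obtain ⟨I, hI, hJI⟩ := (Finset.mem_filter.mp hJ).2
        simp only [Finset.mem_range, Nat.lt_succ_iff]
        calc J.card ≤ I.card := Finset.card_le_card hJI
          _ = n := hcard I hI)
      (fun J => d J * (-1 - y) ^ (n - J.card))]
    refine Finset.sum_congr rfl fun k _ => ?_
    rw [Finset.sum_mul]
    refine Finset.sum_congr ?_ fun J hJ => ?_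
    · ext J
      simp only [Finset.mem_filter, Finset.mem_univ, true_and]
      tauto
    · rw [(Finset.mem_filter.mp hJ).2]
  rw [hR]
  -- replace d J by the sum over top simplices
  have hRd : ∀ J ∈ (Finset.univ : Finset (Finset ι)).filter (fun J => ∃ I ∈ Sn, J ⊆ I),
      d J * (-1 - y) ^ (n - J.card) =
      ∑ I ∈ Sn.filter (fun I => J ⊆ I ∧ ∀ i ∈ I \ J, 0 < uI I i vgen),
        wt I * (-1 - y) ^ (n - J.card) := by
    intro J hJ
    rw [← Finset.sum_mul, hd J (Finset.mem_filter.mp hJ).2 vgen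
      (fun I hI hJI i hi => hgen I hI i (Finset.mem_sdiff.mp hi).1)]
  rw [Finset.sum_congr rfl hRd]
  -- swap the order of summation
  rw [Finset.sum_comm'
    (s' := fun I => (Finset.univ : Finset (Finset ι)).filter
      (fun J => J ⊆ I ∧ ∀ i ∈ I \ J, 0 < uI I i vgen))
    (t' := Sn)
    (fun J I => by
      constructor
      · rintro ⟨hJs, hIt⟩
        obtain ⟨hIn, hcond⟩ := Finset.mem_filter.mp hIt
        exact ⟨Finset.mem_filter.mpr ⟨Finset.mem_univ _, hcond⟩, hIn⟩
      · rintro ⟨hJf, hIn⟩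
        obtain ⟨-, hcond⟩ := Finset.mem_filter.mp hJf
        exact ⟨Finset.mem_filter.mpr ⟨Finset.mem_univ _, I, hIn, hcond.1⟩,
          Finset.mem_filter.mpr ⟨hIn, hcond⟩⟩)]
  -- evaluate the inner sum for each I
  refine Finset.sum_congr rfl fun I hI => ?_
  have hIn : I.card = n := hcard I hI
  set P : Finset ι := I.filter (fun i => 0 < uI I i vgen) with hP
  have hPI : P ⊆ I := Finset.filter_subset _ _
  have hNP : I \ (I \ P) = P := Finset.sdiff_sdiff_eq_self hPI
  -- reindex by J ↦ J \ (I \ P)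
  have hbij : ∑ J ∈ (Finset.univ : Finset (Finset ι)).filter
      (fun J => J ⊆ I ∧ ∀ i ∈ I \ J, 0 < uI I i vgen),
      wt I * (-1 - y) ^ (n - J.card) =
      ∑ S ∈ P.powerset, wt I * (-1 - y) ^ (P.card - S.card) := by
    refine Finset.sum_nbij' (fun J => J \ (I \ P)) (fun S => S ∪ (I \ P)) ?_ ?_ ?_ ?_ ?_
    · intro J hJ
      obtain ⟨-, hJI, hpos⟩ := Finset.mem_filter.mp hJ
      rw [Finset.mem_powerset]
      intro i hi
      obtain ⟨hiJ, hiN⟩ := Finset.mem_sdiff.mp hi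
      have hiI : i ∈ I := hJI hiJ
      rw [hP, Finset.mem_filter]
      refine ⟨hiI, ?_⟩
      by_contra h
      exact hiN (Finset.mem_sdiff.mpr ⟨hiI, fun hiP => h ((Finset.mem_filter.mp hiP).2)⟩)
    · intro S hS
      rw [Finset.mem_powerset] at hS
      simp only [Finset.mem_filter, Finset.mem_univ, true_and]
      constructor
      · exact Finset.union_subset (hS.trans hPI) (Finset.sdiff_subset)
      · intro i hi
        obtain ⟨hiI, hiU⟩ := Finset.mem_sdiff.mp hi
        rw [Finset.mem_union, not_or] at hiU
        have hiP : i ∈ P := by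
          by_contra h
          exact hiU.2 (Finset.mem_sdiff.mpr ⟨hiI, h⟩)
        exact (Finset.mem_filter.mp hiP).2
    · intro J hJ
      obtain ⟨-, hJI, hpos⟩ := Finset.mem_filter.mp hJ
      have hNJ : I \ P ⊆ J := by
        intro i hi
        obtain ⟨hiI, hiP⟩ := Finset.mem_sdiff.mp hi
        by_contra h
        exact hiP (Finset.mem_filter.mpr ⟨hiI, hpos i (Finset.mem_sdiff.mpr ⟨hiI, h⟩)⟩)
      exact Finset.sdiff_union_of_subset hNJ
    · intro S hS
      rw [Finset.mem_powerset] at hS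
      show (S ∪ (I \ P)) \ (I \ P) = S
      rw [Finset.union_sdiff_right]
      exact Finset.sdiff_eq_self_of_disjoint
        (Finset.disjoint_left.mpr fun i hiS hi => (Finset.mem_sdiff.mp hi).2 (hS hiS))
    · intro J hJ
      obtain ⟨-, hJI, hpos⟩ := Finset.mem_filter.mp hJ
      have hNJ : I \ P ⊆ J := by
        intro i hi
        obtain ⟨hiI, hiP⟩ := Finset.mem_sdiff.mp hi
        by_contra h
        exact hiP (Finset.mem_filter.mpr ⟨hiI, hpos i (Finset.mem_sdiff.mpr ⟨hiI, h⟩)⟩)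
      have hc : (J \ (I \ P)).card = J.card - (I \ P).card := Finset.card_sdiff_of_subset hNJ
      have hNc : (I \ P).card = n - P.card := by
        rw [Finset.card_sdiff_of_subset hPI, hIn]
      have hPn : P.card ≤ n := hIn ▸ Finset.card_le_card hPI
      have hJn : J.card ≤ n := hIn ▸ Finset.card_le_card hJI
      have hNJc : (I \ P).card ≤ J.card := Finset.card_le_card hNJ
      rw [hNc] at hNJc
      have hexp : n - J.card = P.card - (J \ (I \ P)).card := by
        rw [hc, hNc]; omega
      show wt I * (-1 - y) ^ (n - J.card) = wt I * (-1 - y) ^ (P.card - (J \ (I \ P)).card)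
      rw [hexp]
  rw [hbij]
  -- evaluate the binomial sum
  rw [← Finset.mul_sum, Finset.sum_powerset]
  have : ∀ j ∈ Finset.range (P.card + 1),
      (∑ S ∈ Finset.powersetCard j P, (-1 - y) ^ (P.card - S.card)) =
      (1 : ℤ) ^ j * (-1 - y) ^ (P.card - j) * (P.card.choose j : ℤ) := by
    intro j hj
    rw [Finset.sum_congr rfl (fun S hS => by
      rw [(Finset.mem_powersetCard.mp hS).2]), Finset.sum_const,
      Finset.card_powersetCard, nsmul_eq_mul, one_pow, one_mul, mul_comm]
  rw [Finset.sum_congr rfl this, ← add_pow]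
  have hPμ : P.card = μ I := rfl
  rw [hPμ]
  congr 2
  ring
end

section
/- Let P(y) be a polynomial of degree n in the variable Y = -y with integer coefficients h_0,…,h_n satisfying h_k = h_{n-k}, h_0 ≠ 0. Suppose P vanishes at every N-th root of unity Y ≠ 1 for some integer N > 1 (equivalently, 1 + Y + ⋯ + Y^{N-1} divides P). Then N ≤ n+1; if N = n+1 then P(Y) = h_0(1 + Y + ⋯ + Y^n); and if N = n then P(Y) = h_0(1+Y)(1 + Y + ⋯ + Y^{n-1}). -/
open Polynomial Finset

lemma coeff_geom_sum_X (N i : ℕ) :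
    (∑ k ∈ Finset.range N, (X : ℤ[X]) ^ k).coeff i = if i < N then 1 else 0 := by
  simp [finset_sum_coeff, coeff_X_pow, Finset.sum_ite_eq']

lemma natDegree_geom_sum_X {N : ℕ} (hN : 0 < N) :
    (∑ k ∈ Finset.range N, (X : ℤ[X]) ^ k).natDegree = N - 1 := by
  apply le_antisymm
  · apply Polynomial.natDegree_sum_le_of_forall_le
    intro i hi
    simp only [Finset.mem_range] at hi
    simp only [natDegree_X_pow]
    omega
  · apply Polynomial.le_natDegree_of_ne_zero
    rw [coeff_geom_sum_X]
    simp [Nat.sub_lt hN]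

/-- Let `P(Y) = Σ_{k=0}^n h_k Y^k ∈ ℤ[Y]` with integer coefficients satisfying
`h_k = h_{n-k}` and `h_0 ≠ 0`.  Suppose `1 + Y + ⋯ + Y^{N-1}` divides `P` for some
integer `N > 1` (equivalently, `P` vanishes at every `N`-th root of unity `≠ 1`).
Then `N ≤ n+1`; if `N = n+1` then `P = h_0(1 + Y + ⋯ + Y^n)`; and if `N = n` then
`P = h_0(1+Y)(1 + Y + ⋯ + Y^{n-1})`. -/
theorem symmetric_poly_divisible_bound
    (n N : ℕ) (hN : 1 < N) (h : ℕ → ℤ)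
    (hsym : ∀ k ≤ n, h (n - k) = h k) (h0 : h 0 ≠ 0)
    (P : Polynomial ℤ)
    (hP : P = ∑ k ∈ Finset.range (n + 1), Polynomial.C (h k) * Polynomial.X ^ k)
    (hdvd : (∑ k ∈ Finset.range N, (Polynomial.X : Polynomial ℤ) ^ k) ∣ P) :
    N ≤ n + 1 ∧
      (N = n + 1 → P = Polynomial.C (h 0) * ∑ k ∈ Finset.range (n + 1), Polynomial.X ^ k) ∧
      (N = n → P = Polynomial.C (h 0) * (1 + Polynomial.X) *
        ∑ k ∈ Finset.range n, Polynomial.X ^ k) := by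
  set Φ := ∑ k ∈ Finset.range N, (X : ℤ[X]) ^ k with hΦ
  have hNpos : 0 < N := by omega
  have hmono : Φ.Monic := monic_geom_sum_X (by omega)
  have hdegΦ : Φ.natDegree = N - 1 := natDegree_geom_sum_X hNpos
  have hcoeff : ∀ k ≤ n, P.coeff k = h k := by
    intro k hk
    simp [hP, finset_sum_coeff, coeff_X_pow, Finset.sum_ite_eq', Nat.lt_succ_iff, hk]
  have hn0 : h n = h 0 := by simpa using hsym 0 (by omega)
  have hc0 : P.coeff 0 = h 0 := hcoeff 0 (by omega)
  have hcn : P.coeff n = h 0 := by rw [hcoeff n le_rfl, hn0]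
  have hPne : P ≠ 0 := fun hz => h0 (by rw [← hc0, hz, coeff_zero])
  have hdegP : P.natDegree = n := by
    apply le_antisymm
    · rw [hP]
      apply Polynomial.natDegree_sum_le_of_forall_le
      intro i hi
      simp only [Finset.mem_range] at hi
      refine le_trans (natDegree_C_mul_le _ _) ?_
      simp only [natDegree_X_pow]; omega
    · exact Polynomial.le_natDegree_of_ne_zero (by rw [hcn]; exact h0)
  obtain ⟨Q, hQ⟩ := hdvd
  have hQne : Q ≠ 0 := fun hz => hPne (by rw [hQ, hz, mul_zero])
  have hdegmul : n = (N - 1) + Q.natDegree := by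
    rw [← hdegP, hQ, hmono.natDegree_mul' hQne, hdegΦ]
  have hΦ0 : Φ.coeff 0 = 1 := by rw [hΦ, coeff_geom_sum_X]; simp [hNpos]
  have hQ0 : Q.coeff 0 = h 0 := by
    have := hc0
    rw [hQ, Polynomial.mul_coeff_zero, hΦ0, one_mul] at this
    exact this
  refine ⟨by omega, ?_, ?_⟩
  · intro hNn
    have hQdeg : Q.natDegree = 0 := by omega
    have : Q = C (h 0) := by
      rw [Polynomial.eq_C_of_natDegree_eq_zero hQdeg, hQ0]
    rw [hQ, this, mul_comm, hΦ, hNn]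
  · intro hNn
    have hQdeg : Q.natDegree = 1 := by omega
    have hQ1 : Q.coeff 1 = h 0 := by
      have hl : P.leadingCoeff = Q.leadingCoeff := by
        rw [hQ, leadingCoeff_mul, hmono.leadingCoeff, one_mul]
      have hl2 : Q.leadingCoeff = h 0 := by
        rw [← hl, Polynomial.leadingCoeff, hdegP]; exact hcn
      rw [← hQdeg]; exact hl2
    have hQeq : Q = C (h 0) * X + C (h 0) := by
      rw [Polynomial.eq_X_add_C_of_natDegree_le_one hQdeg.le, hQ0, hQ1]
    rw [hQ, hQeq, hΦ, hNn]
    ring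
end

section
/- Let Δ be a complete non-singular multi-fan of dimension n ≥ 2 with T₀[Δ] = 1 and w(I) = 1 for all I ∈ Σ^{(n)}. If T_y[Δ] = Σ_{k=0}^n (-y)^k, then #Σ^{(1)} = n+1 and #Σ^{(n)} = n+1. If T_y[Δ] = (1-y)Σ_{k=0}^{n-1}(-y)^k, then #Σ^{(1)} = n+2 and #Σ^{(n)} = 2n, and moreover #Σ^{(2)} = n(n+3)/2 when n ≥ 3. -/
open scoped Classical

private lemma coeffExt (m : ℕ) (a b : ℕ → ℤ)
    (h : ∀ x : ℤ, ∑ k ∈ Finset.range m, a k * x ^ k = ∑ k ∈ Finset.range m, b k * x ^ k) :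
    ∀ k, k < m → a k = b k := by
  intro k hk
  have hpq : (∑ i ∈ Finset.range m, Polynomial.C (a i) * Polynomial.X ^ i) =
      (∑ i ∈ Finset.range m, Polynomial.C (b i) * Polynomial.X ^ i) := by
    apply Polynomial.funext; intro x
    simpa [Polynomial.eval_finset_sum] using h x
  have h2 := congrArg (fun p : Polynomial ℤ => p.coeff k) hpq
  simpa [Polynomial.finset_sum_coeff, Polynomial.coeff_C_mul, Polynomial.coeff_X_pow,
    Finset.sum_ite_eq, Finset.mem_range, hk] using h2

private lemma sandwich {ι : Type*} [Fintype ι] [DecidableEq ι] (k : ℕ) (s t : Finset ι)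
    (hts : t ⊆ s) :
    (Finset.univ.filter fun K : Finset ι => K.card = k ∧ t ⊆ K ∧ K ⊆ s).card =
      if t.card ≤ k then (s.card - t.card).choose (k - t.card) else 0 := by
  split_ifs with h
  · rw [← Finset.card_sdiff_of_subset hts, ← Finset.card_powersetCard (k - t.card) (s \ t)]
    apply Finset.card_bij (fun K _ => K \ t)
    · intro K hK
      obtain ⟨hck, htK, hKs⟩ := (Finset.mem_filter.mp hK).2
      rw [Finset.mem_powersetCard]
      exact ⟨Finset.sdiff_subset_sdiff hKs (Finset.Subset.refl t),
        by rw [Finset.card_sdiff_of_subset htK, hck]⟩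
    · intro K1 hK1 K2 hK2 he
      obtain ⟨-, htK1, -⟩ := (Finset.mem_filter.mp hK1).2
      obtain ⟨-, htK2, -⟩ := (Finset.mem_filter.mp hK2).2
      rw [← Finset.sdiff_union_of_subset htK1, ← Finset.sdiff_union_of_subset htK2, he]
    · intro S hS
      rw [Finset.mem_powersetCard] at hS
      have hdisj : Disjoint S t := Finset.disjoint_of_subset_left hS.1 Finset.sdiff_disjoint
      refine ⟨S ∪ t, ?_, ?_⟩
      · rw [Finset.mem_filter]
        refine ⟨Finset.mem_univ _, ?_, Finset.subset_union_right,
          Finset.union_subset (hS.1.trans Finset.sdiff_subset) hts⟩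
        rw [Finset.card_union_of_disjoint hdisj, hS.2]
        omega
      · rw [Finset.union_sdiff_right, Finset.sdiff_eq_self_iff_disjoint.mpr hdisj]
  · rw [Finset.card_eq_zero, Finset.filter_eq_empty_iff]
    rintro K - ⟨hck, htK, -⟩
    exact h (hck ▸ Finset.card_le_card htK)

private lemma sum_range_peel2 {M : Type*} [AddCommMonoid M] (p : ℕ) (f : ℕ → M) :
    ∑ m ∈ Finset.range (p + 3), f m
      = (∑ m ∈ Finset.range (p + 1), f m) + f (p + 1) + f (p + 2) := by
  rw [Finset.sum_range_succ, Finset.sum_range_succ]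

private lemma sum_range_peel02 {M : Type*} [AddCommMonoid M] (p : ℕ) (f : ℕ → M) :
    ∑ m ∈ Finset.range (p + 3), f m
      = ((∑ m ∈ Finset.range (p + 1), f (m + 1)) + f 0) + f (p + 2) := by
  rw [Finset.sum_range_succ, Finset.sum_range_succ']

private lemma sum_range_peel3 {M : Type*} [AddCommMonoid M] (p : ℕ) (f : ℕ → M) :
    ∑ m ∈ Finset.range (p + 3), f m
      = ((∑ m ∈ Finset.range p, f m) + f p + f (p + 1)) + f (p + 2) := by
  rw [Finset.sum_range_succ, Finset.sum_range_succ, Finset.sum_range_succ]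

/-- Let `Δ` be a complete non-singular multi-fan of dimension `n ≥ 2` (setup as
before: top simplices `Sn`, every ray `i` lies in some top simplex (`hcover`, so
`Σ^{(1)} = ι`), `{v i}_{i∈I}` a basis of `L` for each `I ∈ Σ^{(n)}` with dual basis
`uI I i`; `d`/`hd` encode completeness and degrees of projections) with
`T₀[Δ] = h₀(Δ) = 1` and `w(I) = 1` for all `I ∈ Σ^{(n)}`; `hfun k = h_k(Δ)` are the
coefficients of `T_y[Δ]`.  If `T_y[Δ] = Σ_{k=0}^n (-y)^k` then `#Σ^{(1)} = n+1` and
`#Σ^{(n)} = n+1`.  If `T_y[Δ] = (1-y)Σ_{k=0}^{n-1}(-y)^k` then `#Σ^{(1)} = n+2`,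
`#Σ^{(n)} = 2n`, and moreover `#Σ^{(2)} = n(n+3)/2` when `n ≥ 3`. -/
theorem multifan_counts_from_Ty
    {L : Type*} [AddCommGroup L]
    {ι : Type*} [Fintype ι]
    (n : ℕ) (hn : 2 ≤ n) (v : ι → L) (Sn : Finset (Finset ι)) (hSn : Sn.Nonempty)
    (hcard : ∀ I ∈ Sn, I.card = n)
    (hcover : ∀ i : ι, ∃ I ∈ Sn, i ∈ I)
    (wt : Finset ι → ℤ) (hwt : ∀ I ∈ Sn, wt I = 1)
    (uI : Finset ι → ι → (L →ₗ[ℤ] ℤ))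
    (hdual : ∀ I ∈ Sn, ∀ i ∈ I, ∀ j ∈ I, uI I i (v j) = if i = j then 1 else 0)
    (hbasis : ∀ I ∈ Sn, ∀ x : L, x = ∑ i ∈ I, uI I i x • v i)
    (d : Finset ι → ℤ)
    (hd : ∀ K : Finset ι, (∃ I ∈ Sn, K ⊆ I) → ∀ vg : L,
      (∀ I ∈ Sn, K ⊆ I → ∀ i ∈ I \ K, uI I i vg ≠ 0) →
      ∑ I ∈ Sn.filter (fun I => K ⊆ I ∧ ∀ i ∈ I \ K, 0 < uI I i vg), wt I = d K)
    (vgen : L) (hgen : ∀ I ∈ Sn, ∀ i ∈ I, uI I i vgen ≠ 0)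
    (hfun : ℕ → ℤ)
    (hhfun : ∀ k, hfun k =
      ∑ I ∈ Sn.filter (fun I => (I.filter fun i => 0 < uI I i vgen).card = k), wt I)
    (hT0 : hfun 0 = 1) :
    ((∀ y : ℤ, ∑ k ∈ Finset.range (n + 1), hfun k * (-y) ^ k =
        ∑ k ∈ Finset.range (n + 1), (-y) ^ k) →
      Fintype.card ι = n + 1 ∧ Sn.card = n + 1) ∧
    ((∀ y : ℤ, ∑ k ∈ Finset.range (n + 1), hfun k * (-y) ^ k =
        (1 - y) * ∑ k ∈ Finset.range n, (-y) ^ k) →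
      Fintype.card ι = n + 2 ∧ Sn.card = 2 * n ∧
        (3 ≤ n →
          2 * ((Finset.univ : Finset (Finset ι)).filter
            (fun J => J.card = 2 ∧ ∃ I ∈ Sn, J ⊆ I)).card = n * (n + 3))) := by
  classical
  obtain ⟨p, rfl⟩ : ∃ p, n = p + 2 := ⟨n - 2, by omega⟩
  obtain ⟨I₀, hI₀⟩ := hSn
  -- sums of weights over subfamilies are cardinalities
  have hwtsum : ∀ s : Finset (Finset ι), s ⊆ Sn → ∑ I ∈ s, wt I = (s.card : ℤ) := by
    intro s hs
    rw [Finset.sum_congr rfl (fun I hI => hwt I (hs hI)), Finset.sum_const, nsmul_eq_mul, mul_one]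
  have hcardd : ∀ (K : Finset ι) (vg : L), (∃ I ∈ Sn, K ⊆ I) →
      (∀ I ∈ Sn, K ⊆ I → ∀ i ∈ I \ K, uI I i vg ≠ 0) →
      ((Sn.filter fun I => K ⊆ I ∧ ∀ i ∈ I \ K, 0 < uI I i vg).card : ℤ) = d K := by
    intro K vg hK hvg
    rw [← hd K hK vg hvg, hwtsum _ (Finset.filter_subset _ _)]
  have hhc : ∀ m : ℕ, hfun m =
      ((Sn.filter fun I => (I.filter fun i => 0 < uI I i vgen).card = m).card : ℤ) := by
    intro m
    rw [hhfun m, hwtsum _ (Finset.filter_subset _ _)]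
  -- d ∅ = 1
  have hd0 : d (∅ : Finset ι) = 1 := by
    have hg : ∀ I ∈ Sn, (∅ : Finset ι) ⊆ I → ∀ i ∈ I \ (∅ : Finset ι), uI I i (-vgen) ≠ 0 := by
      intro I hI _ i hi
      rw [Finset.sdiff_empty] at hi
      simpa using hgen I hI i hi
    have h1 := hcardd ∅ (-vgen) ⟨I₀, hI₀, Finset.empty_subset _⟩ hg
    have h2 : (Sn.filter fun I =>
          (∅ : Finset ι) ⊆ I ∧ ∀ i ∈ I \ (∅ : Finset ι), 0 < uI I i (-vgen))
        = Sn.filter fun I => (I.filter fun i => 0 < uI I i vgen).card = 0 := by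
      apply Finset.filter_congr
      intro I hI
      rw [Finset.card_eq_zero, Finset.filter_eq_empty_iff]
      constructor
      · rintro ⟨-, h⟩ i hi
        have h3 := h i (by rwa [Finset.sdiff_empty])
        rw [map_neg] at h3
        intro h4
        linarith
      · intro h
        refine ⟨Finset.empty_subset _, fun i hi => ?_⟩
        rw [Finset.sdiff_empty] at hi
        have h3 := h hi
        have h4 := hgen I hI i hi
        rw [map_neg]
        rcases lt_or_gt_of_ne h4 with h5 | h5
        · linarith
        · exact absurd h5 h3
    rw [h2] at h1
    rw [← h1, ← hhc 0]
    exact hT0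
  -- a bound making vectors "generic enough"
  set Nb : ℕ := Sn.sup (fun I => I.sup fun i => (uI I i vgen).natAbs) with hNb
  set N : ℤ := (Nb : ℤ) + 1 with hNdef
  have hNpos : (0 : ℤ) < N := by rw [hNdef]; positivity
  have hNbig : ∀ I ∈ Sn, ∀ i ∈ I, |uI I i vgen| < N := by
    intro I hI i hi
    have h1 : (uI I i vgen).natAbs ≤ Nb := by
      rw [hNb]
      exact le_trans
        (Finset.le_sup (f := fun i => ((uI I i) vgen).natAbs) hi)
        (Finset.le_sup (f := fun I => I.sup fun i => ((uI I i) vgen).natAbs) hI)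
    have h2 : |uI I i vgen| = ((uI I i vgen).natAbs : ℤ) := Int.abs_eq_natAbs _
    rw [h2, hNdef]
    exact_mod_cast Nat.lt_succ_of_le h1
  have hsignP : ∀ c gv : ℤ, |gv| < N → 0 < c → 0 < N * c + gv := by
    intro c gv hgv hc
    have h2 := abs_lt.mp hgv
    have h3 : N * 1 ≤ N * c := mul_le_mul_of_nonneg_left (by omega) hNpos.le
    linarith
  have hsignN : ∀ c gv : ℤ, |gv| < N → c < 0 → N * c + gv < 0 := by
    intro c gv hgv hc
    have h2 := abs_lt.mp hgv
    have h3 : N * c ≤ N * (-1) := mul_le_mul_of_nonneg_left (by omega) hNpos.le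
    linarith
  have hsign0 : ∀ c gv : ℤ, |gv| < N → c ≠ 0 → N * c + gv ≠ 0 := by
    intro c gv hgv hc
    rcases lt_or_gt_of_ne hc with h | h
    · exact ne_of_lt (hsignN c gv hgv h)
    · exact ne_of_gt (hsignP c gv hgv h)
  have hval : ∀ (x : L) (I : Finset ι) (i : ι),
      uI I i (N • x + vgen) = N * uI I i x + uI I i vgen := by
    intro x I i
    rw [map_add, map_smul, smul_eq_mul]
  have hds : ∀ I ∈ Sn, ∀ i ∈ I, ∀ S : Finset ι, S ⊆ I →
      uI I i (∑ j ∈ S, v j) = if i ∈ S then 1 else 0 := by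
    intro I hI i hi S hS
    rw [map_sum, Finset.sum_congr rfl (fun j hj => hdual I hI i hi j (hS hj))]
    exact Finset.sum_ite_eq S i (fun _ => 1)
  -- The key fact: every face is contained in exactly one "positive" top simplex.
  have hA : ∀ K : Finset ι, (∃ I ∈ Sn, K ⊆ I) →
      (Sn.filter fun I => K ⊆ I ∧ ∀ i ∈ I \ K, 0 < uI I i vgen).card = 1 := by
    intro K hK
    obtain ⟨J₀, hJ₀, hKJ₀⟩ := hK
    have hgenK : ∀ I ∈ Sn, K ⊆ I → ∀ i ∈ I \ K, uI I i vgen ≠ 0 :=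
      fun I hI _ i hi => hgen I hI i (Finset.mem_sdiff.mp hi).1
    have hcv := hcardd K vgen ⟨J₀, hJ₀, hKJ₀⟩ hgenK
    -- lower bound : d K ≥ 1
    have hlow : 1 ≤ d K := by
      have hg1 : ∀ I ∈ Sn, K ⊆ I → ∀ i ∈ I \ K,
          uI I i (N • (∑ j ∈ J₀ \ K, v j) + vgen) ≠ 0 := by
        intro I hI hKI i hi
        rw [hval]
        by_cases hc : uI I i (∑ j ∈ J₀ \ K, v j) = 0
        · rw [hc, mul_zero, zero_add]
          exact hgen I hI i (Finset.mem_sdiff.mp hi).1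
        · exact hsign0 _ _ (hNbig I hI i (Finset.mem_sdiff.mp hi).1) hc
      have h2 := hcardd K (N • (∑ j ∈ J₀ \ K, v j) + vgen) ⟨J₀, hJ₀, hKJ₀⟩ hg1
      have hmem : J₀ ∈ Sn.filter (fun I => K ⊆ I ∧ ∀ i ∈ I \ K,
          0 < uI I i (N • (∑ j ∈ J₀ \ K, v j) + vgen)) := by
        rw [Finset.mem_filter]
        refine ⟨hJ₀, hKJ₀, fun i hi => ?_⟩
        have hiI : i ∈ J₀ := (Finset.mem_sdiff.mp hi).1
        rw [hval, hds J₀ hJ₀ i hiI _ Finset.sdiff_subset, if_pos hi]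
        exact hsignP _ _ (hNbig J₀ hJ₀ i hiI) one_pos
      rw [← h2]
      exact_mod_cast Finset.card_pos.mpr ⟨J₀, hmem⟩
    -- upper bound
    have hg2 : ∀ I ∈ Sn, (∅ : Finset ι) ⊆ I → ∀ i ∈ I \ (∅ : Finset ι),
        uI I i (N • (∑ j ∈ K, v j) + vgen) ≠ 0 := by
      intro I hI _ i hi
      rw [Finset.sdiff_empty] at hi
      rw [hval]
      by_cases hc : uI I i (∑ j ∈ K, v j) = 0
      · rw [hc, mul_zero, zero_add]; exact hgen I hI i hi
      · exact hsign0 _ _ (hNbig I hI i hi) hc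
    have h3 := hcardd ∅ (N • (∑ j ∈ K, v j) + vgen) ⟨J₀, hJ₀, Finset.empty_subset _⟩ hg2
    have hsub : (Sn.filter fun I => K ⊆ I ∧ ∀ i ∈ I \ K, 0 < uI I i vgen) ⊆
        Sn.filter fun I => (∅ : Finset ι) ⊆ I ∧ ∀ i ∈ I \ (∅ : Finset ι),
          0 < uI I i (N • (∑ j ∈ K, v j) + vgen) := by
      intro I hI
      rw [Finset.mem_filter] at hI
      obtain ⟨hISn, hKI, hpos⟩ := hI
      rw [Finset.mem_filter]
      refine ⟨hISn, Finset.empty_subset _, fun i hi => ?_⟩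
      rw [Finset.sdiff_empty] at hi
      rw [hval, hds I hISn i hi K hKI]
      by_cases hiK : i ∈ K
      · rw [if_pos hiK, mul_one]
        have h5 := abs_lt.mp (hNbig I hISn i hi)
        linarith
      · rw [if_neg hiK, mul_zero, zero_add]
        exact hpos i (Finset.mem_sdiff.mpr ⟨hi, hiK⟩)
    have hup := Finset.card_le_card hsub
    rw [hd0] at h3
    have h4 : (Sn.filter fun I => (∅ : Finset ι) ⊆ I ∧ ∀ i ∈ I \ (∅ : Finset ι),
        0 < uI I i (N • (∑ j ∈ K, v j) + vgen)).card = 1 := by exact_mod_cast h3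
    rw [h4] at hup
    have h5 : (1 : ℤ) ≤
        ((Sn.filter fun I => K ⊆ I ∧ ∀ i ∈ I \ K, 0 < uI I i vgen).card : ℤ) := by
      rw [hcv]; exact hlow
    have h6 : 1 ≤ (Sn.filter fun I => K ⊆ I ∧ ∀ i ∈ I \ K, 0 < uI I i vgen).card := by
      exact_mod_cast h5
    omega
  -- double counting : number of k-faces
  have hEk : ∀ k : ℕ,
      (Finset.univ.filter fun K : Finset ι => K.card = k ∧ ∃ I ∈ Sn, K ⊆ I).card
      = ∑ m ∈ Finset.range (p + 3),
          (Sn.filter fun I => (I.filter fun i => 0 < uI I i vgen).card = m).card *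
            (if p + 2 - m ≤ k then m.choose (k - (p + 2 - m)) else 0) := by
    intro k
    have h1 : (Finset.univ.filter fun K : Finset ι => K.card = k ∧ ∃ I ∈ Sn, K ⊆ I).card
        = ∑ I ∈ Sn, (if p + 2 - (I.filter fun i => 0 < uI I i vgen).card ≤ k then
            ((I.filter fun i => 0 < uI I i vgen).card).choose
              (k - (p + 2 - (I.filter fun i => 0 < uI I i vgen).card)) else 0) := by
      rw [Finset.card_eq_sum_ones]
      rw [Finset.sum_congr rfl (fun K hK => (hA K (Finset.mem_filter.mp hK).2.2).symm)]
      rw [Finset.sum_congr rfl (fun K _ => Finset.card_filter _ _)]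
      rw [Finset.sum_comm]
      apply Finset.sum_congr rfl
      intro I hI
      rw [← Finset.card_filter]
      have h2 : (Finset.univ.filter fun K : Finset ι =>
              K.card = k ∧ ∃ I' ∈ Sn, K ⊆ I').filter
            (fun K => K ⊆ I ∧ ∀ i ∈ I \ K, 0 < uI I i vgen)
          = Finset.univ.filter fun K : Finset ι => K.card = k ∧
              (I \ I.filter fun i => 0 < uI I i vgen) ⊆ K ∧ K ⊆ I := by
        ext K
        simp only [Finset.mem_filter, Finset.mem_univ, true_and]
        constructor
        · rintro ⟨⟨hck, -⟩, hKI, hposK⟩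
          refine ⟨hck, ?_, hKI⟩
          intro j hj
          rw [Finset.mem_sdiff, Finset.mem_filter] at hj
          by_contra hjK
          exact hj.2 ⟨hj.1, hposK j (Finset.mem_sdiff.mpr ⟨hj.1, hjK⟩)⟩
        · rintro ⟨hck, hnegK, hKI⟩
          refine ⟨⟨hck, ⟨I, hI, hKI⟩⟩, hKI, fun i hi => ?_⟩
          rw [Finset.mem_sdiff] at hi
          by_contra hni
          exact hi.2 (hnegK (Finset.mem_sdiff.mpr ⟨hi.1,
            fun hmem => hni ((Finset.mem_filter.mp hmem).2)⟩))
      rw [h2, sandwich k I _ Finset.sdiff_subset]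
      have hc1 : (I \ I.filter fun i => 0 < uI I i vgen).card
          = p + 2 - (I.filter fun i => 0 < uI I i vgen).card := by
        rw [Finset.card_sdiff_of_subset (Finset.filter_subset _ _), hcard I hI]
      have hμ : (I.filter fun i => 0 < uI I i vgen).card ≤ p + 2 := by
        have h3 := Finset.card_filter_le I (fun i => 0 < uI I i vgen)
        have h4 := hcard I hI
        omega
      rw [hc1, hcard I hI]
      have hc2 : p + 2 - (p + 2 - (I.filter fun i => 0 < uI I i vgen).card)
          = (I.filter fun i => 0 < uI I i vgen).card := by omega
      rw [hc2]
    have hmap : ∀ I ∈ Sn,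
        (I.filter fun i => 0 < uI I i vgen).card ∈ Finset.range (p + 3) := by
      intro I hI
      have h3 := Finset.card_filter_le I (fun i => 0 < uI I i vgen)
      have h4 := hcard I hI
      exact Finset.mem_range.mpr (by omega)
    have h5 := Finset.sum_fiberwise_of_maps_to hmap
      (fun I => (if p + 2 - (I.filter fun i => 0 < uI I i vgen).card ≤ k then
            ((I.filter fun i => 0 < uI I i vgen).card).choose
              (k - (p + 2 - (I.filter fun i => 0 < uI I i vgen).card)) else 0))
    rw [h1, ← h5]
    apply Finset.sum_congr rfl
    intro m hm
    rw [Finset.sum_congr rfl (fun I hI => by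
      rw [(Finset.mem_filter.mp hI).2]), Finset.sum_const, smul_eq_mul]
  -- identification of 1-faces with rays
  have hcardι : Fintype.card ι
      = (Finset.univ.filter fun K : Finset ι => K.card = 1 ∧ ∃ I ∈ Sn, K ⊆ I).card := by
    have hE1 : (Finset.univ.filter fun K : Finset ι => K.card = 1 ∧ ∃ I ∈ Sn, K ⊆ I)
        = Finset.univ.image (fun i : ι => ({i} : Finset ι)) := by
      ext K
      simp only [Finset.mem_filter, Finset.mem_univ, true_and, Finset.mem_image]
      constructor
      · rintro ⟨h1, -⟩
        obtain ⟨i, rfl⟩ := Finset.card_eq_one.mp h1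
        exact ⟨i, rfl⟩
      · rintro ⟨i, rfl⟩
        refine ⟨Finset.card_singleton i, ?_⟩
        obtain ⟨I, hI, hiI⟩ := hcover i
        exact ⟨I, hI, Finset.singleton_subset_iff.mpr hiI⟩
    rw [hE1, Finset.card_image_of_injective _ Finset.singleton_injective, Finset.card_univ]
  have hSncard : Sn.card = ∑ m ∈ Finset.range (p + 3),
      (Sn.filter fun I => (I.filter fun i => 0 < uI I i vgen).card = m).card :=
    Finset.card_eq_sum_card_fiberwise (fun I hI => Finset.mem_range.mpr (by
      have h3 := Finset.card_filter_le I (fun i => 0 < uI I i vgen)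
      have h4 := hcard I hI
      omega))
  constructor
  · -- Case 1 : T_y = ∑ (-y)^k
    intro H
    have hco : ∀ k, k < p + 3 → hfun k = 1 := by
      apply coeffExt (p + 3) hfun (fun _ => 1)
      intro x
      have hx := H (-x)
      simp only [neg_neg] at hx
      simpa using hx
    have hcval : ∀ m, m < p + 3 →
        (Sn.filter fun I => (I.filter fun i => 0 < uI I i vgen).card = m).card = 1 := by
      intro m hm
      have h1 := (hhc m).symm.trans (hco m hm)
      exact_mod_cast h1
    constructor
    · rw [hcardι, hEk 1, sum_range_peel2]
      rw [Finset.sum_eq_zero (fun m hm => by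
        rw [if_neg (by
          have h1 := Finset.mem_range.mp hm
          omega), mul_zero])]
      rw [hcval (p + 1) (by omega), hcval (p + 2) (by omega)]
      simp only [show p + 2 - (p + 1) = 1 from by omega,
        show p + 2 - (p + 2) = 0 from by omega]
      norm_num [Nat.choose_one_right]
      omega
    · rw [hSncard,
        Finset.sum_congr rfl (fun m hm => hcval m (Finset.mem_range.mp hm)),
        Finset.sum_const, Finset.card_range, smul_eq_mul, mul_one]
  · -- Case 2 : T_y = (1-y) ∑ (-y)^k
    intro H
    have hrhs : ∀ x : ℤ, ∑ k ∈ Finset.range (p + 3), hfun k * x ^ k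
        = ∑ k ∈ Finset.range (p + 3),
            (fun k => if k = 0 ∨ k = p + 2 then (1 : ℤ) else 2) k * x ^ k := by
      intro x
      have hx := H (-x)
      simp only [neg_neg] at hx
      rw [hx]
      have h1 : (1 : ℤ) - -x = 1 + x := by ring
      rw [h1, add_mul, one_mul, Finset.mul_sum]
      have e1 : ∑ k ∈ Finset.range (p + 3), (if k = p + 2 then (0 : ℤ) else x ^ k)
          = ∑ k ∈ Finset.range (p + 2), x ^ k := by
        rw [Finset.sum_range_succ, if_pos rfl, add_zero]
        exact Finset.sum_congr rfl fun k hk => if_neg (by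
          have := Finset.mem_range.mp hk; omega)
      have e2 : ∑ k ∈ Finset.range (p + 3), (if k = 0 then (0 : ℤ) else x ^ k)
          = ∑ k ∈ Finset.range (p + 2), x * x ^ k := by
        rw [Finset.sum_range_succ', if_pos rfl, add_zero]
        exact Finset.sum_congr rfl fun k hk => by
          rw [if_neg (Nat.succ_ne_zero k)]; ring
      rw [← e1, ← e2, ← Finset.sum_add_distrib]
      apply Finset.sum_congr rfl
      intro k hk
      have hk' := Finset.mem_range.mp hk
      by_cases h0 : k = 0
      · subst h0
        have h02 : ¬(0 = p + 2) := by omega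
        simp [h02]
      · by_cases hp2 : k = p + 2
        · subst hp2
          simp [h0]
        · have hor : ¬(k = 0 ∨ k = p + 2) := by tauto
          simp only [if_neg h0, if_neg hp2, if_neg hor]
          ring
    have hco := coeffExt (p + 3) hfun _ hrhs
    have hcval : ∀ m, m < p + 3 →
        (Sn.filter fun I => (I.filter fun i => 0 < uI I i vgen).card = m).card
          = if m = 0 ∨ m = p + 2 then 1 else 2 := by
      intro m hm
      have h1 := (hhc m).symm.trans (hco m hm)
      by_cases h2 : m = 0 ∨ m = p + 2
      · rw [if_pos h2]; rw [if_pos h2] at h1; exact_mod_cast h1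
      · rw [if_neg h2]; rw [if_neg h2] at h1; exact_mod_cast h1
    have v1 : (Sn.filter fun I =>
        (I.filter fun i => 0 < uI I i vgen).card = p + 1).card = 2 := by
      rw [hcval (p + 1) (by omega), if_neg (by omega)]
    have v2 : (Sn.filter fun I =>
        (I.filter fun i => 0 < uI I i vgen).card = p + 2).card = 1 := by
      rw [hcval (p + 2) (by omega), if_pos (Or.inr rfl)]
    refine ⟨?_, ?_, ?_⟩
    · rw [hcardι, hEk 1, sum_range_peel2]
      rw [Finset.sum_eq_zero (fun m hm => by
        rw [if_neg (by
          have h1 := Finset.mem_range.mp hm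
          omega), mul_zero])]
      rw [v1, v2]
      simp only [show p + 2 - (p + 1) = 1 from by omega,
        show p + 2 - (p + 2) = 0 from by omega]
      norm_num [Nat.choose_one_right]
      omega
    · rw [hSncard, sum_range_peel02]
      rw [Finset.sum_congr rfl (fun m hm => by
        rw [hcval (m + 1) (by have := Finset.mem_range.mp hm; omega),
          if_neg (by have := Finset.mem_range.mp hm; omega)]),
        hcval 0 (by omega), if_pos (Or.inl rfl), v2,
        Finset.sum_const, Finset.card_range, smul_eq_mul]
      omega
    · intro hn3
      have hp1 : 1 ≤ p := by omega
      have v0 : (Sn.filter fun I =>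
          (I.filter fun i => 0 < uI I i vgen).card = p).card = 2 := by
        rw [hcval p (by omega), if_neg (by omega)]
      have hev : 2 ∣ (p + 2) * (p + 1) := by
        have h1 : Even ((p + 1) * (p + 2)) := Nat.even_mul_succ_self (p + 1)
        rw [mul_comm] at h1
        exact h1.two_dvd
      have h2c : 2 * ((p + 2).choose 2) = (p + 2) * (p + 1) := by
        rw [Nat.choose_two_right]
        have h1 : p + 2 - 1 = p + 1 := rfl
        rw [h1, Nat.mul_div_cancel' hev]
      rw [hEk 2, sum_range_peel3]
      rw [Finset.sum_eq_zero (fun m hm => by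
        rw [if_neg (by
          have h1 := Finset.mem_range.mp hm
          omega), mul_zero])]
      rw [v0, v1, v2]
      simp only [show p + 2 - p = 2 from by omega,
        show p + 2 - (p + 1) = 1 from by omega,
        show p + 2 - (p + 2) = 0 from by omega]
      norm_num [Nat.choose_one_right]
      zify
      zify at h2c
      linear_combination h2c
end

section
/- With M = ℙ((⊕_{i=r+1}^n ξ^{k_i}) ⊕ 1) over ℙ^r as above (1 ≤ r < n), the first Chern class c₁(M) is divisible by n in H²(M;ℤ) if and only if r = 1 and n divides Σ_{i=2}^n k_i + 2. -/
/-- With `M = ℙ((⊕_{i=r+1}^n ξ^{k_i}) ⊕ 1)` over `ℙ^r`, `1 ≤ r < n`: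
`H²(M;ℤ)` is free abelian on `ω, ω'` (`hindep`, `hspan`) and
`c₁(M) = (n-r+1)ω + (Σ_{i=r+1}^n k_i + r + 1)ω'` (`hcM`).  Then `c₁(M)` is divisible
by `n` in `H²(M;ℤ)` if and only if `r = 1` and `n` divides `Σ_{i=2}^n k_i + 2`. -/
theorem c1_divisible_by_n_iff
    {H2 : Type*} [AddCommGroup H2]
    (n r : ℕ) (hr : 1 ≤ r) (hrn : r < n) (k : ℕ → ℤ)
    (ω ω' : H2)
    (hindep : ∀ a b : ℤ, a • ω + b • ω' = 0 → a = 0 ∧ b = 0)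
    (hspan : ∀ h : H2, ∃ a b : ℤ, h = a • ω + b • ω')
    (cM : H2)
    (hcM : cM = ((n : ℤ) - (r : ℤ) + 1) • ω +
      ((∑ i ∈ Finset.Icc (r + 1) n, k i) + (r : ℤ) + 1) • ω') :
    (∃ c : H2, cM = (n : ℤ) • c) ↔
      (r = 1 ∧ (n : ℤ) ∣ (∑ i ∈ Finset.Icc 2 n, k i) + 2) := by
  constructor
  · rintro ⟨c, hc⟩
    obtain ⟨a, b, rfl⟩ := hspan c
    rw [hcM, smul_add, smul_smul, smul_smul] at hc
    have h0 : (((n : ℤ) - (r : ℤ) + 1) - (n : ℤ) * a) • ω +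
        (((∑ i ∈ Finset.Icc (r + 1) n, k i) + (r : ℤ) + 1) - (n : ℤ) * b) • ω' = 0 := by
      rw [sub_smul, sub_smul, sub_add_sub_comm, hc, sub_self]
    obtain ⟨h1, h2⟩ := hindep _ _ h0
    have hd1 : (n : ℤ) ∣ (n : ℤ) - (r : ℤ) + 1 := ⟨a, by linarith⟩
    have hd2 : (n : ℤ) ∣ (∑ i ∈ Finset.Icc (r + 1) n, k i) + (r : ℤ) + 1 :=
      ⟨b, by linarith⟩
    have hdr : (n : ℤ) ∣ (r : ℤ) - 1 := by
      have h := (dvd_refl (n : ℤ)).sub hd1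
      rwa [show (n : ℤ) - ((n : ℤ) - (r : ℤ) + 1) = (r : ℤ) - 1 from by ring] at h
    have hr1 : r = 1 := by
      have hri : (1 : ℤ) ≤ (r : ℤ) := by exact_mod_cast hr
      have hrni : (r : ℤ) < (n : ℤ) := by exact_mod_cast hrn
      have := Int.eq_zero_of_dvd_of_nonneg_of_lt (by linarith) (by linarith) hdr
      have : (r : ℤ) = 1 := by linarith
      exact_mod_cast this
    subst hr1
    refine ⟨rfl, ?_⟩
    obtain ⟨b', hb⟩ := hd2
    exact ⟨b', by push_cast at hb; linarith⟩
  · rintro ⟨rfl, hd⟩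
    obtain ⟨m, hm⟩ := hd
    refine ⟨ω + m • ω', ?_⟩
    rw [hcM, smul_add, smul_smul]
    norm_num
    rw [show (∑ i ∈ Finset.Icc 2 n, k i) + 1 + 1 = (n : ℤ) * m from by linarith]
end
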